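/- For every integer d ≥ 1, every k ∈ ℤ, and every b ∈ ℝ^d, there exist an affine map A : ℝ^d → ℝ^{8d}, an affine map B : ℝ^{8d} → ℝ², and a vector w ∈ ℝ² such that ψ_{k,b}(x) = ⟨w, σ(B(σ(A x)))⟩ for all x ∈ ℝ^d, where σ denotes coordinatewise application of rect(x) = max{0, x}. In other words, each wavelet term ψ_{k,b} is computed exactly by a network with 8d rectifier units in the first layer, 2 rectifier units in the second layer, and a single linear output unit. -/
import Mathlib


open MeasureTheory

/-- The rectifier (ReLU) function. -/
noncomputable def rect (x : ℝ) : ℝ := max 0 x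

/-- The trapezoid function `t`: equal to 2 on [-1,1], vanishing outside (-3,3), linear between. -/
noncomputable def trap (x : ℝ) : ℝ := rect (x + 3) - rect (x + 1) - rect (x - 1) + rect (x - 3)

/-- The scaling ("father") function `φ(x) = C_d · rect(Σ_j t(x_j) − 2(d−1))` on `ℝ^d`. -/
noncomputable def scalingFn (d : ℕ) (Cd : ℝ) (x : EuclideanSpace ℝ (Fin d)) : ℝ :=
  Cd * rect ((∑ j, trap (x j)) - 2 * ((d : ℝ) - 1))

/-- The ("mother") wavelet `ψ(x) = φ(x) − 2⁻¹ φ(2^{−1/d} x)`. -/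
noncomputable def psiFn (d : ℕ) (Cd : ℝ) (x : EuclideanSpace ℝ (Fin d)) : ℝ :=
  scalingFn d Cd x - 2⁻¹ * scalingFn d Cd (((2 : ℝ) ^ (-(1 : ℝ) / d)) • x)

/-- The wavelet term `ψ_{k,b}(x) = 2^{k/2} ψ(2^{k/d}(x − b))`. -/
noncomputable def psikb (d : ℕ) (Cd : ℝ) (k : ℤ) (b x : EuclideanSpace ℝ (Fin d)) : ℝ :=
  (2 : ℝ) ^ ((k : ℝ) / 2) * psiFn d Cd (((2 : ℝ) ^ ((k : ℝ) / d)) • (x - b))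

/-- every wavelet term `ψ_{k,b}` is computed exactly by a network with `8d`
rectifier units in the first layer, `2` rectifier units in the second layer, and a single
linear output unit. -/
theorem statement13 (d : ℕ) (hd : 1 ≤ d) (Cd : ℝ) (hCd : 0 < Cd)
    (hnorm : ∫ x : EuclideanSpace ℝ (Fin d), scalingFn d Cd x = 1)
    (k : ℤ) (b : EuclideanSpace ℝ (Fin d)) :
    ∃ (W1 : Matrix (Fin (8 * d)) (Fin d) ℝ) (c1 : Fin (8 * d) → ℝ)
      (W2 : Matrix (Fin 2) (Fin (8 * d)) ℝ) (c2 : Fin 2 → ℝ) (w : Fin 2 → ℝ),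
      ∀ x : EuclideanSpace ℝ (Fin d),
        psikb d Cd k b x =
          ∑ i : Fin 2,
            w i * max 0 ((W2.mulVec (fun j => max 0 ((W1.mulVec x + c1) j)) + c2) i) := by
  classical
  set a : ℝ := (2:ℝ) ^ ((k:ℝ)/(d:ℝ)) with ha
  set a' : ℝ := (2:ℝ) ^ (-(1:ℝ)/(d:ℝ)) * a with ha'
  set e : Fin 8 × Fin d ≃ Fin (8*d) := finProdFinEquiv with he
  set coeff : Fin 8 → ℝ := ![a,a,a,a,a',a',a',a'] with hcoeff
  set off : Fin 8 → ℝ := ![3,1,-1,-3,3,1,-1,-3] with hoff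
  set row : Fin 2 → Fin 8 → ℝ := ![![1,-1,-1,1,0,0,0,0], ![0,0,0,0,1,-1,-1,1]] with hrow
  set W1 : Matrix (Fin (8*d)) (Fin d) ℝ :=
    Matrix.of (fun i j => if j = (e.symm i).2 then coeff (e.symm i).1 else 0) with hW1
  set c1 : Fin (8*d) → ℝ :=
    fun i => off (e.symm i).1 - coeff (e.symm i).1 * b (e.symm i).2 with hc1
  set W2 : Matrix (Fin 2) (Fin (8*d)) ℝ :=
    Matrix.of (fun r i => row r (e.symm i).1) with hW2
  refine ⟨W1, c1, W2, (fun _ => -(2 * ((d:ℝ) - 1))),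
    ![(2:ℝ)^((k:ℝ)/2) * Cd, -((2:ℝ)^((k:ℝ)/2) * (2⁻¹ * Cd))], fun x => ?_⟩
  -- first layer
  have h1 : ∀ i : Fin (8*d),
      max 0 ((W1.mulVec x + c1) i)
      = rect (coeff (e.symm i).1 * (x (e.symm i).2 - b (e.symm i).2) + off (e.symm i).1) := by
    intro i
    have : (W1.mulVec x + c1) i
        = coeff (e.symm i).1 * (x (e.symm i).2 - b (e.symm i).2) + off (e.symm i).1 := by
      simp only [Pi.add_apply, hc1, hW1, Matrix.mulVec, dotProduct, Matrix.of_apply,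
        ite_mul, zero_mul, Finset.sum_ite_eq', Finset.mem_univ, if_true]
      ring
    rw [this]; rfl
  -- second layer sums
  have h2 : ∀ r : Fin 2, (W2.mulVec (fun i => max 0 ((W1.mulVec x + c1) i))) r
      = ∑ j : Fin d, ∑ m : Fin 8,
          row r m * rect (coeff m * (x j - b j) + off m) := by
    intro r
    have : (W2.mulVec (fun i => max 0 ((W1.mulVec x + c1) i))) r
        = ∑ i : Fin (8*d), row r (e.symm i).1 *
            rect (coeff (e.symm i).1 * (x (e.symm i).2 - b (e.symm i).2) + off (e.symm i).1) := by
      simp only [Matrix.mulVec, dotProduct, hW2, Matrix.of_apply]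
      exact Finset.sum_congr rfl (fun i _ => by rw [h1 i])
    rw [this,
      Equiv.sum_comp e.symm (fun p : Fin 8 × Fin d =>
        row r p.1 * rect (coeff p.1 * (x p.2 - b p.2) + off p.1)),
      Fintype.sum_prod_type, Finset.sum_comm]
  have h20 : (W2.mulVec (fun i => max 0 ((W1.mulVec x + c1) i))) 0
      = ∑ j : Fin d, trap (a * (x j - b j)) :=
    (h2 0).trans (Finset.sum_congr rfl fun j _ => by
      simp only [hrow, hcoeff, hoff, trap, Fin.sum_univ_succ, Fin.sum_univ_zero,
        Matrix.cons_val_zero, Matrix.cons_val_succ, Fin.succ_zero_eq_one]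
      ring)
  have h21 : (W2.mulVec (fun i => max 0 ((W1.mulVec x + c1) i))) 1
      = ∑ j : Fin d, trap (a' * (x j - b j)) :=
    (h2 1).trans (Finset.sum_congr rfl fun j _ => by
      simp only [hrow, hcoeff, hoff, trap, Fin.sum_univ_succ, Fin.sum_univ_zero,
        Matrix.cons_val_zero, Matrix.cons_val_succ, Fin.succ_zero_eq_one,
        Matrix.cons_val_one, Matrix.head_cons]
      ring)
  have fact1 : ∀ j : Fin d, ((((2:ℝ)^((k:ℝ)/(d:ℝ)))) • (x - b)) j = a * (x j - b j) :=
    fun j => rfl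
  have fact2 : ∀ j : Fin d,
      (((2:ℝ) ^ (-(1:ℝ)/(d:ℝ))) • (((2:ℝ)^((k:ℝ)/(d:ℝ))) • (x - b))) j
        = a' * (x j - b j) := fun j => (mul_assoc _ _ _).symm
  have key : psikb d Cd k b x
      = (2:ℝ)^((k:ℝ)/2) * (Cd * rect ((∑ j, trap (a * (x j - b j))) - 2*((d:ℝ)-1))
        - 2⁻¹ * (Cd * rect ((∑ j, trap (a' * (x j - b j))) - 2*((d:ℝ)-1)))) := by
    simp only [psikb, psiFn, scalingFn, fact1, fact2]
  have hA : (W2.mulVec (fun i => max 0 ((W1.mulVec x + c1) i))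
        + fun _ : Fin 2 => -(2 * ((d:ℝ) - 1))) 0
      = (∑ j, trap (a * (x j - b j))) - 2*((d:ℝ)-1) := by
    rw [Pi.add_apply, h20]; ring
  have hB : (W2.mulVec (fun i => max 0 ((W1.mulVec x + c1) i))
        + fun _ : Fin 2 => -(2 * ((d:ℝ) - 1))) 1
      = (∑ j, trap (a' * (x j - b j))) - 2*((d:ℝ)-1) := by
    rw [Pi.add_apply, h21]; ring
  rw [key, Fin.sum_univ_two, hA, hB]
  simp only [Matrix.cons_val_zero, Matrix.cons_val_one, Matrix.head_cons, rect]
  ring
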